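/- arXiv:1911.08540 — 6 statements merged into one kernel-verified Lean document; each statement's English description precedes it below -/
import Mathlib

section
/- Let A, B, C be finite subsets of ℚ with A ∩ C ⊆ B. Define A ⫫_B C to mean: for all a ∈ A \ B and c ∈ C \ B with a ≤ c, there exists b ∈ B with a ≤ b ≤ c. Then this relation satisfies transitivity on the left: if B ⊆ A, B ⊆ C ⊆ D, A ⫫_B C and A ⫫_C D, then A ⫫_B D. -/
/-- `A ⫫_B C` on finite subsets of ℚ: for every `a ∈ A \ B` and `c ∈ C \ B` with
`a ≤ c` there is `b ∈ B` with `a ≤ b ≤ c`. -/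
def IndepQ (A B C : Finset ℚ) : Prop :=
  ∀ a ∈ A, a ∉ B → ∀ c ∈ C, c ∉ B → a ≤ c → ∃ b ∈ B, a ≤ b ∧ b ≤ c

theorem IndepQ.exists_mem_between {A B C : Finset ℚ} (h : IndepQ A B C) {a c : ℚ}
    (ha : a ∈ A) (haB : a ∉ B) (hc : c ∈ C) (hac : a ≤ c) :
    ∃ b ∈ B, a ≤ b ∧ b ≤ c := by
  by_cases hcB : c ∈ B
  · exact ⟨c, hcB, hac, le_rfl⟩
  · exact h a ha haB c hc hcB hac

theorem indepQ_trans_general (A B C D : Finset ℚ)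
    (hAC : ∀ x ∈ A, x ∈ C → x ∈ B)
    (h1 : IndepQ A B C) (h2 : IndepQ A C D) :
    IndepQ A B D := by
  intro a ha haB d hd hdB had
  by_cases hdC : d ∈ C
  · exact h1 a ha haB d hdC hdB had
  · have haC : a ∉ C := fun haC => haB (hAC a ha haC)
    obtain ⟨c, hcC, hac, hcd⟩ := h2 a ha haC d hd hdC had
    obtain ⟨b, hbB, hab, hbc⟩ := h1.exists_mem_between ha haB hcC hac
    exact ⟨b, hbB, hab, hbc.trans hcd⟩

/-- Transitivity on the left for `⫫` on `(ℚ, ≤)`: if `B ⊆ A`, `B ⊆ C ⊆ D`, `A ⫫_B C` and `A ⫫_C D`, then `A ⫫_B D`. -/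
theorem indepQ_trans (A B C D : Finset ℚ)
    (hAC : ∀ x ∈ A, x ∈ C → x ∈ B)
    (hBA : B ⊆ A) (hBC : B ⊆ C) (hCD : C ⊆ D)
    (h1 : IndepQ A B C) (h2 : IndepQ A C D) :
    IndepQ A B D :=
  indepQ_trans_general A B C D hAC h1 h2
end

section
/- For the relation on finite subsets of ℚ defined by A ⫫_B C iff for all a ∈ A \ B and c ∈ C \ B with a ≤ c there exists b ∈ B with a ≤ b ≤ c, monotonicity holds: if A ⫫_B (C ∪ D) then A ⫫_B C and A ⫫_{B ∪ C} D. -/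
namespace IndepQ

variable {A B B' C C' : Finset ℚ}

theorem anti_right (h : IndepQ A B C) (hC : C' ⊆ C) : IndepQ A B C' :=
  fun a ha haB c hc hcB hac => h a ha haB c (hC hc) hcB hac

theorem mono_base (h : IndepQ A B C) (hB : B ⊆ B') : IndepQ A B' C := by
  intro a ha haB' c hc hcB' hac
  obtain ⟨b, hb, hab, hbc⟩ :=
    h a ha (fun haB => haB' (hB haB)) c hc (fun hcB => hcB' (hB hcB)) hac
  exact ⟨b, hB hb, hab, hbc⟩

end IndepQ

/-- Monotonicity: if `A ⫫_B (C ∪ D)` then `A ⫫_B C` and `A ⫫_{B ∪ C} D`. -/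
theorem indepQ_monotone (A B C D : Finset ℚ) (h : IndepQ A B (C ∪ D)) :
    IndepQ A B C ∧ IndepQ A (B ∪ C) D :=
  ⟨h.anti_right Finset.subset_union_left,
    (h.anti_right Finset.subset_union_right).mono_base Finset.subset_union_left⟩
end

section
/- For the relation on finite subsets of ℚ defined by A ⫫_B C iff for all a ∈ A \ B and c ∈ C \ B with a ≤ c there exists b ∈ B with a ≤ b ≤ c, existence holds in the following form: for every finite B ⊆ ℚ, every a ∈ ℚ, and every finite C ⊆ ℚ, there exists a' ∈ ℚ in the same orbit as a under the pointwise stabilizer of B in the group of order automorphisms of ℚ, such that {a'} ⫫_B C. -/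
open Finset

section Stretch

variable {K : Type*} [Field K] [LinearOrder K] [IsStrictOrderedRing K] {p k x : K}

def stretch (p k x : K) : K := if x ≤ p then x else p + k * (x - p)

omit [IsStrictOrderedRing K] in
lemma stretch_of_le (h : x ≤ p) : stretch p k x = x := if_pos h

omit [IsStrictOrderedRing K] in
lemma stretch_of_ge (h : p ≤ x) : stretch p k x = p + k * (x - p) := by
  unfold stretch
  split_ifs with h'
  · simp [le_antisymm h' h]
  · rfl

lemma monotone_stretch (hk : 0 ≤ k) : Monotone (stretch p k) := by
  refine MonotoneOn.Iic_union_Ici (a := p) ?_ ?_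
  · exact monotoneOn_id.congr fun x hx => (stretch_of_le hx).symm
  · have : Monotone fun x => p + k * (x - p) := fun x y hxy => by
      linarith [mul_le_mul_of_nonneg_left hxy hk]
    exact this.monotoneOn _ |>.congr fun x hx => (stretch_of_ge hx).symm

lemma stretch_inv_stretch (hk : 0 < k) : stretch p k⁻¹ (stretch p k x) = x := by
  rcases le_total x p with h | h
  · rw [stretch_of_le h, stretch_of_le h]
  · have hp : p ≤ p + k * (x - p) := le_add_of_nonneg_right (by nlinarith)
    rw [stretch_of_ge h, stretch_of_ge hp]
    field_simp
    ring

def stretchIso (p : K) (hk : 0 < k) : K ≃o K :=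
  Equiv.toOrderIso
    { toFun := stretch p k
      invFun := stretch p k⁻¹
      left_inv := fun _ => stretch_inv_stretch hk
      right_inv := fun x => by simpa using stretch_inv_stretch (p := p) (x := x) (inv_pos.2 hk) }
    (monotone_stretch hk.le) (monotone_stretch (inv_nonneg.2 hk.le))

@[simp]
lemma stretchIso_apply (hk : 0 < k) : stretchIso p hk x = stretch p k x := rfl

end Stretch

variable {K : Type*} [Field K] [LinearOrder K] [IsStrictOrderedRing K]

theorem exists_orderIso_fix_Iic_Ici_apply {l u a a' : K} (hla : l < a) (hau : a < u)
    (hla' : l < a') (ha'u : a' < u) :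
    ∃ g : K ≃o K, (∀ x ≤ l, g x = x) ∧ (∀ x, u ≤ x → g x = x) ∧ g a = a' := by
  set k₁ := (a' - l) / (a - l)
  set k₂ := (u - a') / (u - a)
  have hk₁ : 0 < k₁ := div_pos (sub_pos.2 hla') (sub_pos.2 hla)
  have hk₂ : 0 < k₂ := div_pos (sub_pos.2 ha'u) (sub_pos.2 hau)
  have hal : a - l ≠ 0 := (sub_pos.2 hla).ne'
  have hua : u - a ≠ 0 := (sub_pos.2 hau).ne'
  -- slopes `k₁` on `[l, a]`, `k₂` on `[a, u]`, and `1` elsewhere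
  refine ⟨(stretchIso l hk₁).trans ((stretchIso a' (div_pos hk₂ hk₁)).trans
    (stretchIso u (inv_pos.2 hk₂))), fun x hx => ?_, fun x hx => ?_, ?_⟩ <;>
    simp only [OrderIso.trans_apply, stretchIso_apply]
  · rw [stretch_of_le hx, stretch_of_le (hx.trans hla'.le), stretch_of_le (by linarith)]
  · have h₁ : stretch l k₁ x = a' + k₁ * (x - a) := by
      rw [stretch_of_ge (by linarith)]
      simp only [k₁]
      field_simp
      ring
    have h₂ : stretch a' (k₂ / k₁) (a' + k₁ * (x - a)) = u + k₂ * (x - u) := by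
      rw [stretch_of_ge (le_add_of_nonneg_right (mul_nonneg hk₁.le (by linarith)))]
      simp only [k₁, k₂]
      field_simp
      ring
    rw [h₁, h₂, stretch_of_ge (le_add_of_nonneg_right (mul_nonneg hk₂.le (by linarith)))]
    field_simp [hk₂.ne']
    ring
  · have h₁ : stretch l k₁ a = a' := by
      rw [stretch_of_ge hla.le]
      simp only [k₁]
      field_simp
      ring
    rw [h₁, stretch_of_le le_rfl, stretch_of_le ha'u.le]

theorem exists_orderIso_fix_apply_of_same_cut {B : Finset K} {a a' : K} (ha : a ∉ B)
    (hlt : ∀ b ∈ B, b < a → b < a') (hgt : ∀ b ∈ B, a < b → a' < b) :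
    ∃ g : K ≃o K, (∀ b ∈ B, g b = b) ∧ g a = a' := by
  obtain ⟨l, hBl, hl⟩ := Order.exists_between_finsets (B.filter (· < a)) {a, a'} (by
    simp only [mem_filter, mem_insert, mem_singleton]
    rintro b ⟨hb, hba⟩ _ (rfl | rfl)
    exacts [hba, hlt b hb hba])
  obtain ⟨u, hu, hBu⟩ := Order.exists_between_finsets {a, a'} (B.filter (a < ·)) (by
    simp only [mem_filter, mem_insert, mem_singleton]
    rintro _ (rfl | rfl) b ⟨hb, hab⟩
    exacts [hab, hgt b hb hab])
  obtain ⟨g, hgl, hgu, hga⟩ := exists_orderIso_fix_Iic_Ici_apply (hl a (by simp))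
    (hu a (by simp)) (hl a' (by simp)) (hu a' (by simp))
  refine ⟨g, fun b hb => ?_, hga⟩
  rcases (ne_of_mem_of_not_mem hb ha).lt_or_gt with h | h
  · exact hgl b (hBl b (mem_filter.2 ⟨hb, h⟩)).le
  · exact hgu b (hBu b (mem_filter.2 ⟨hb, h⟩)).le

/-- Existence: each `a` has a point `a'` in the same orbit over `B` with `{a'} ⫫_B C`. -/
theorem indepQ_existence (B C : Finset ℚ) (a : ℚ) :
    ∃ a' : ℚ, (∃ g : ℚ ≃o ℚ, (∀ b ∈ B, g b = b) ∧ g a = a') ∧ IndepQ {a'} B C := by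
  by_cases haB : a ∈ B
  · exact ⟨a, ⟨OrderIso.refl ℚ, fun _ _ => rfl, rfl⟩,
      fun x hx hxB => (hxB (mem_singleton.1 hx ▸ haB)).elim⟩
  set above := B.filter (a < ·)
  set below := B.filter (· < a) ∪ C.filter fun c => ∀ b ∈ above, c < b
  obtain ⟨a', hbelow, habove⟩ := Order.exists_between_finsets below above (by
    simp only [below, above, mem_union, mem_filter]
    rintro x (⟨-, hxa⟩ | ⟨-, hx⟩) b hb
    exacts [hxa.trans hb.2, hx b hb])
  refine ⟨a', exists_orderIso_fix_apply_of_same_cut haB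
    (fun b hb hba => hbelow b (by simp [below, hb, hba]))
    (fun b hb hab => habove b (by simp [above, hb, hab])), ?_⟩
  rintro x hx - c hc - hxc
  obtain rfl := mem_singleton.1 hx
  have : c ∉ below := fun hc' => (hbelow c hc').not_ge hxc
  simp only [below, mem_union, mem_filter, not_or, not_and, not_forall, not_lt] at this
  obtain ⟨b, hb, hbc⟩ := this.2 hc
  exact ⟨b, (mem_filter.1 hb).1, (habove b hb).le, hbc⟩
end

section
/- For the relation on finite subsets of ℚ defined by A ⫫_B C iff for all a ∈ A \ B and c ∈ C \ B with a ≤ c there exists b ∈ B with a ≤ b ≤ c, stationarity holds for singletons: if a and a' lie in the same orbit under the pointwise stabilizer of a finite set B in Aut(ℚ, ≤), and {a} ⫫_B C and {a'} ⫫_B C for a finite set C, then a and a' lie in the same orbit under the pointwise stabilizer of B ∪ C. -/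
namespace Finset

variable {α : Type*} [LinearOrder α]

theorem exists_lt_forall_le_of_lt [NoMinOrder α] (s : Finset α) (u : α) :
    ∃ l < u, ∀ d ∈ s, d < u → d ≤ l := by
  obtain ⟨l₀, hl₀⟩ := exists_lt u
  let t := insert l₀ (s.filter (· < u))
  refine ⟨t.max' (insert_nonempty _ _), (max'_lt_iff _ _).2 ?_, fun d hd hdu ↦ ?_⟩
  · simp only [t, mem_insert, mem_filter, forall_eq_or_imp]
    exact ⟨hl₀, fun _ h ↦ h.2⟩
  · exact le_max' t d (mem_insert_of_mem (mem_filter.2 ⟨hd, hdu⟩))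

theorem exists_gt_forall_ge_of_gt [NoMaxOrder α] (s : Finset α) (u : α) :
    ∃ r > u, ∀ d ∈ s, u < d → r ≤ d :=
  exists_lt_forall_le_of_lt (α := αᵒᵈ) s u

end Finset

section Glue

variable {α β : Type*} [LinearOrder α] [LinearOrder β]

theorem strictMono_ite_le {f g : α → β} (hf : StrictMono f) (hg : StrictMono g) {c : α}
    (hfg : f c = g c) : StrictMono fun x ↦ if x ≤ c then f x else g x := by
  intro x y hxy
  dsimp only
  split_ifs with hx hy hy
  · exact hf hxy
  · calc f x ≤ f c := hf.monotone hx
      _ = g c := hfg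
      _ < g y := hg (not_le.1 hy)
  · exact absurd (hxy.le.trans hy) hx
  · exact hg hxy

noncomputable def OrderIso.glue (c : α) (f g : α ≃o β) (hfg : f c = g c) : α ≃o β :=
  StrictMono.orderIsoOfSurjective _ (strictMono_ite_le f.strictMono g.strictMono hfg) fun y ↦ by
    by_cases hy : y ≤ f c
    · exact ⟨f.symm y, by simp [f.symm_apply_le, hy]⟩
    · refine ⟨g.symm y, ?_⟩
      have : c < g.symm y := g.lt_symm_apply.2 (hfg ▸ not_le.1 hy)
      simp [not_le.2 this]

namespace OrderIso

variable {c x : α} {f g : α ≃o β} {hfg : f c = g c}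

theorem glue_apply_of_le (hx : x ≤ c) : glue c f g hfg x = f x :=
  if_pos hx

theorem glue_apply_of_ge (hx : c ≤ x) : glue c f g hfg x = g x := by
  rcases hx.eq_or_lt with rfl | hlt
  · exact (if_pos le_rfl).trans hfg
  · exact if_neg (not_le.2 hlt)

end OrderIso

end Glue

section LinearOrderedField

variable {K : Type*} [Field K] [LinearOrder K] [IsStrictOrderedRing K]

noncomputable def lineIso {x₀ x₁ y₀ y₁ : K} (hx : x₀ < x₁) (hy : y₀ < y₁) : K ≃o K :=
  ((OrderIso.addRight (-x₀)).trans
    (OrderIso.mulLeft₀ ((y₁ - y₀) / (x₁ - x₀)) (div_pos (sub_pos.2 hy) (sub_pos.2 hx)))).trans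
    (OrderIso.addLeft y₀)

theorem lineIso_apply {x₀ x₁ y₀ y₁ : K} (hx : x₀ < x₁) (hy : y₀ < y₁) (x : K) :
    lineIso hx hy x = y₀ + (y₁ - y₀) / (x₁ - x₀) * (x - x₀) := by
  simp [lineIso, sub_eq_add_neg]

theorem lineIso_apply_left {x₀ x₁ y₀ y₁ : K} (hx : x₀ < x₁) (hy : y₀ < y₁) :
    lineIso hx hy x₀ = y₀ := by
  simp [lineIso_apply]

theorem lineIso_apply_right {x₀ x₁ y₀ y₁ : K} (hx : x₀ < x₁) (hy : y₀ < y₁) :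
    lineIso hx hy x₁ = y₁ := by
  rw [lineIso_apply, div_mul_cancel₀ _ (sub_pos.2 hx).ne']
  ring

theorem exists_orderIso_apply_eq_of_mem_Ioo {l r a a' : K} (ha : a ∈ Set.Ioo l r)
    (ha' : a' ∈ Set.Ioo l r) :
    ∃ g : K ≃o K, g a = a' ∧ (∀ x ≤ l, g x = x) ∧ ∀ x, r ≤ x → g x = x := by
  let left := OrderIso.glue l (OrderIso.refl K) (lineIso ha.1 ha'.1) (lineIso_apply_left _ _).symm
  let right := OrderIso.glue r (lineIso ha.2 ha'.2) (OrderIso.refl K) (lineIso_apply_right _ _)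
  have hleft : left a = a' :=
    (OrderIso.glue_apply_of_ge ha.1.le).trans (lineIso_apply_right _ _)
  have hright : right a = a' :=
    (OrderIso.glue_apply_of_le ha.2.le).trans (lineIso_apply_left _ _)
  refine ⟨OrderIso.glue a left right (hleft.trans hright.symm),
    (OrderIso.glue_apply_of_le le_rfl).trans hleft, fun x hx ↦ ?_, fun x hx ↦ ?_⟩
  · exact (OrderIso.glue_apply_of_le (hx.trans ha.1.le)).trans (OrderIso.glue_apply_of_le hx)
  · exact (OrderIso.glue_apply_of_ge (ha.2.le.trans hx)).trans (OrderIso.glue_apply_of_ge hx)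

theorem exists_orderIso_fixing_of_le_iff_le {D : Finset K} {a a' : K} (ha : a ∉ D) (ha' : a' ∉ D)
    (h : ∀ d ∈ D, a ≤ d ↔ a' ≤ d) : ∃ g : K ≃o K, (∀ d ∈ D, g d = d) ∧ g a = a' := by
  have hD : ∀ d ∈ D, d < min a a' ∨ max a a' < d := by
    intro d hd
    have had : a ≠ d := fun hEq ↦ ha (hEq ▸ hd)
    have ha'd : a' ≠ d := fun hEq ↦ ha' (hEq ▸ hd)
    by_cases hle : a ≤ d
    · exact .inr (max_lt (hle.lt_of_ne had) (((h d hd).1 hle).lt_of_ne ha'd))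
    · exact .inl (lt_min (not_le.1 hle) (not_le.1 (mt (h d hd).2 hle)))
  obtain ⟨l, hl, hlD⟩ := D.exists_lt_forall_le_of_lt (min a a')
  obtain ⟨r, hr, hrD⟩ := D.exists_gt_forall_ge_of_gt (max a a')
  obtain ⟨g, hga, hgl, hgr⟩ := exists_orderIso_apply_eq_of_mem_Ioo
    ⟨hl.trans_le (min_le_left a a'), (le_max_left a a').trans_lt hr⟩
    ⟨hl.trans_le (min_le_right a a'), (le_max_right a a').trans_lt hr⟩
  refine ⟨g, fun d hd ↦ ?_, hga⟩
  rcases hD d hd with hlt | hgt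
  exacts [hgl d (hlD d hd hlt), hgr d (hrD d hd hgt)]

end LinearOrderedField

namespace IndepQ

variable {a a' c : ℚ} {B C : Finset ℚ}

theorem notMem_right (h : IndepQ {a} B C) (ha : a ∉ B) : a ∉ C := fun haC ↦ by
  obtain ⟨b, hb, hab, hba⟩ := h a (Finset.mem_singleton_self a) ha a haC ha le_rfl
  exact ha (le_antisymm hba hab ▸ hb)

theorem le_of_le (h : IndepQ {a} B C) (ha : a ∉ B) (hB : ∀ b ∈ B, a ≤ b → a' ≤ b) (hc : c ∈ C)
    (hac : a ≤ c) : a' ≤ c := by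
  by_cases hcB : c ∈ B
  · exact hB c hcB hac
  obtain ⟨b, hb, hab, hbc⟩ := h a (Finset.mem_singleton_self a) ha c hc hcB hac
  exact (hB b hb hab).trans hbc

end IndepQ

/-- Stationarity for singletons over `(ℚ, ≤)`. -/
theorem indepQ_stationarity (B C : Finset ℚ) (a a' : ℚ)
    (horb : ∃ g : ℚ ≃o ℚ, (∀ b ∈ B, g b = b) ∧ g a = a')
    (h1 : IndepQ {a} B C) (h2 : IndepQ {a'} B C) :
    ∃ g : ℚ ≃o ℚ, (∀ b ∈ B ∪ C, g b = b) ∧ g a = a' := by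
  obtain ⟨g, hgB, hga⟩ := horb
  rcases eq_or_ne a a' with rfl | hne
  · exact ⟨OrderIso.refl ℚ, fun _ _ ↦ rfl, rfl⟩
  have haB : a ∉ B := fun h ↦ hne (by rw [← hga, hgB a h])
  have ha'B : a' ∉ B := fun h ↦ hne (g.injective (by rw [hga, hgB a' h]))
  have hB : ∀ b ∈ B, a ≤ b ↔ a' ≤ b := fun b hb ↦ by
    rw [← hga]
    nth_rewrite 2 [← hgB b hb]
    exact g.le_iff_le.symm
  refine exists_orderIso_fixing_of_le_iff_le ?_ ?_ fun d hd ↦ ?_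
  · simp [haB, h1.notMem_right haB]
  · simp [ha'B, h2.notMem_right ha'B]
  rcases Finset.mem_union.1 hd with hdB | hdC
  · exact hB d hdB
  · exact ⟨h1.le_of_le haB (fun b hb ↦ (hB b hb).1) hdC,
      h2.le_of_le ha'B (fun b hb ↦ (hB b hb).2) hdC⟩
end

section
/- Suppose ⫫ is a stationary weak independence relation on a countable homogeneous structure M. Let A, B, C be finite substructures with A ⫫_B C and let g₁, ..., gₙ ∈ Aut(M). Then there exists e ∈ Aut(M) fixing B ∪ C pointwise such that A ⫫_B (C ∪ g₁^e(C) ∪ ... ∪ gₙ^e(C)), where g^e denotes e g e⁻¹; and there exists f ∈ Aut(M) fixing A ∪ B pointwise such that (A ∪ g₁^f(A) ∪ ... ∪ gₙ^f(A)) ⫫_B C. -/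
variable {M : Type*} [DecidableEq M]

/-- The finite set of coordinates of a tuple. -/
def tset {n : ℕ} (x : Fin n → M) : Finset M := Finset.univ.image x

/-- Two tuples realise the same type over the finite set `B` (types = orbits of the
pointwise stabiliser of `B` in the automorphism group `G`, by homogeneity). -/
def SameTypeOver (G : Subgroup (Equiv.Perm M)) (B : Finset M) {n : ℕ}
    (x y : Fin n → M) : Prop :=
  ∃ g ∈ G, (∀ b ∈ B, g b = b) ∧ ∀ i, g (x i) = y i

/-- `indep` is a stationary weak independence relation on `M` (with automorphism
group `G`): invariance, monotonicity, transitivity, existence and stationarity,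
each in left and right form; symmetry is NOT assumed. -/
structure IsSWIR (G : Subgroup (Equiv.Perm M))
    (indep : Finset M → Finset M → Finset M → Prop) : Prop where
  invariance : ∀ g ∈ G, ∀ A B C : Finset M,
    indep A B C → indep (A.image g) (B.image g) (C.image g)
  monotone_right : ∀ A B C D : Finset M,
    indep A B (C ∪ D) → indep A B C ∧ indep A (B ∪ C) D
  monotone_left : ∀ A B C D : Finset M,
    indep (A ∪ D) B C → indep A B C ∧ indep D (A ∪ B) C
  trans_right : ∀ A B C D : Finset M, indep A B C → indep A (B ∪ C) D → indep A B D
  trans_left : ∀ A B C D : Finset M, indep A B C → indep D (A ∪ B) C → indep D B C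
  exists_right : ∀ (B C : Finset M) (n : ℕ) (x : Fin n → M),
    ∃ a : Fin n → M, SameTypeOver G B x a ∧ indep (tset a) B C
  exists_left : ∀ (B C : Finset M) (n : ℕ) (x : Fin n → M),
    ∃ a : Fin n → M, SameTypeOver G B x a ∧ indep C B (tset a)
  stationary_right : ∀ (B C : Finset M) (n : ℕ) (x y : Fin n → M),
    SameTypeOver G B x y → indep (tset x) B C → indep (tset y) B C →
    SameTypeOver G (B ∪ C) x y
  stationary_left : ∀ (B C : Finset M) (n : ℕ) (x y : Fin n → M),
    SameTypeOver G B x y → indep C B (tset x) → indep C B (tset y) →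
    SameTypeOver G (B ∪ C) x y

/-- `g` moves almost R-maximally: every type over a finite `X` has a realisation `a`
with `a ⫫_X g(a)`. -/
def MovesAlmostRMax (G : Subgroup (Equiv.Perm M))
    (indep : Finset M → Finset M → Finset M → Prop) (g : Equiv.Perm M) : Prop :=
  ∀ (X : Finset M) (n : ℕ) (x : Fin n → M),
    ∃ a : Fin n → M, SameTypeOver G X x a ∧
      indep (tset a) X (tset (fun i => g (a i)))

/-- `g` moves almost L-maximally: every type over a finite `X` has a realisation `a`
with `g(a) ⫫_X a`. -/
def MovesAlmostLMax (G : Subgroup (Equiv.Perm M))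
    (indep : Finset M → Finset M → Finset M → Prop) (g : Equiv.Perm M) : Prop :=
  ∀ (X : Finset M) (n : ℕ) (x : Fin n → M),
    ∃ a : Fin n → M, SameTypeOver G X x a ∧
      indep (tset (fun i => g (a i))) X (tset a)


/-! Put `C ∪ D` in an independent position `σ(C ∪ D)` over `B` (existence); by monotonicity
`A ⫫_B σ(C)`, so stationarity gives `τ` fixing `A ∪ B` with `τσ = id` on `C`, and `e = τσ`
satisfies `A ⫫_B C ∪ e(D)` by invariance. For `D = ⋃ᵢ gᵢ(C)` one has `e(D) = ⋃ᵢ gᵢᵉ(C)` since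
`e` fixes `C`. The second half is the first for the reversed relation `(A, B, C) ↦ C ⫫_B A`,
which is again a stationary weak independence relation. -/

lemma exists_tset_eq (D : Finset M) : ∃ (n : ℕ) (d : Fin n → M), tset d = D :=
  ⟨D.card, fun i => D.equivFin.symm i, by
    ext m
    simpa [tset] using ⟨fun ⟨i, hi⟩ => hi ▸ (D.equivFin.symm i).2,
      fun hm => ⟨D.equivFin ⟨m, hm⟩, by simp⟩⟩⟩

lemma tset_comp (σ : Equiv.Perm M) {n : ℕ} (x : Fin n → M) :
    tset (σ ∘ x) = (tset x).image σ := by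
  simp [tset, Finset.image_image]

lemma Finset.image_perm_eq_self {S : Finset M} {π : Equiv.Perm M} (h : ∀ m ∈ S, π m = m) :
    S.image π = S :=
  (Finset.image_congr h).trans S.image_id

lemma Finset.image_biUnion_image_conj {ι : Type*} (s : Finset ι) (C : Finset M)
    (g : ι → Equiv.Perm M) {e : Equiv.Perm M} (he : ∀ m ∈ C, e m = m) :
    (s.biUnion fun i => C.image (g i)).image e = s.biUnion fun i => C.image ⇑(e * g i * e⁻¹) := by
  rw [Finset.biUnion_image]
  refine Finset.biUnion_congr rfl fun i _ => ?_
  rw [Finset.image_image]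
  refine Finset.image_congr fun c hc => ?_
  simp only [Function.comp_apply, Equiv.Perm.mul_apply,
    Equiv.Perm.inv_eq_iff_eq.2 (he c hc).symm]

namespace IsSWIR

variable {G : Subgroup (Equiv.Perm M)} {indep : Finset M → Finset M → Finset M → Prop}

theorem flip (hswir : IsSWIR G indep) : IsSWIR G fun A B C => indep C B A where
  invariance g hg A B C := hswir.invariance g hg C B A
  monotone_right A B C D h := by
    simpa only [Finset.union_comm B] using hswir.monotone_left C B A D h
  monotone_left A B C D h := by
    simpa only [Finset.union_comm A] using hswir.monotone_right C B A D h
  trans_right A B C D h h' :=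
    hswir.trans_left C B A D h (by rwa [Finset.union_comm])
  trans_left A B C D h h' :=
    hswir.trans_right C B A D h (by rwa [Finset.union_comm])
  exists_right B C := hswir.exists_left B C
  exists_left B C := hswir.exists_right B C
  stationary_right B C := hswir.stationary_left B C
  stationary_left B C := hswir.stationary_right B C

theorem exists_indep_image (hswir : IsSWIR G indep) (A B D : Finset M) :
    ∃ σ ∈ G, (∀ b ∈ B, σ b = b) ∧ indep A B (D.image σ) := by
  obtain ⟨n, d, rfl⟩ := exists_tset_eq D
  obtain ⟨a, ⟨σ, hσG, hσB, hσd⟩, hind⟩ := hswir.exists_left B A n d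
  obtain rfl : a = σ ∘ d := funext fun i => (hσd i).symm
  exact ⟨σ, hσG, hσB, tset_comp σ d ▸ hind⟩

theorem exists_cancel_of_indep_image (hswir : IsSWIR G indep) {A B C : Finset M}
    (h : indep A B C) {σ : Equiv.Perm M} (hσG : σ ∈ G) (hσB : ∀ b ∈ B, σ b = b)
    (hσ : indep A B (C.image σ)) :
    ∃ τ ∈ G, (∀ m ∈ B ∪ A, τ m = m) ∧ ∀ c ∈ C, τ (σ c) = c := by
  obtain ⟨n, c, rfl⟩ := exists_tset_eq C
  obtain ⟨τ, hτG, hτ, hτc⟩ := hswir.stationary_left B A n c (σ ∘ c) ⟨σ, hσG, hσB, fun _ => rfl⟩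
    h (by rwa [tset_comp])
  refine ⟨τ⁻¹, inv_mem hτG, fun m hm => ?_, ?_⟩
  · exact Equiv.Perm.inv_eq_iff_eq.2 (hτ m hm).symm
  · simp only [tset, Finset.mem_image, Finset.mem_univ, true_and, forall_exists_index,
      forall_apply_eq_imp_iff]
    exact fun i => Equiv.Perm.inv_eq_iff_eq.2 (hτc i).symm

theorem exists_fix_indep_union_image (hswir : IsSWIR G indep) {A B C : Finset M}
    (h : indep A B C) (D : Finset M) :
    ∃ e ∈ G, (∀ m ∈ B ∪ C, e m = m) ∧ indep A B (C ∪ D.image e) := by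
  obtain ⟨σ, hσG, hσB, hind⟩ := hswir.exists_indep_image A B (C ∪ D)
  have hindC : indep A B (C.image σ) :=
    (hswir.monotone_right A B _ _ (by rwa [Finset.image_union] at hind)).1
  obtain ⟨τ, hτG, hτ, hτσ⟩ := hswir.exists_cancel_of_indep_image h hσG hσB hindC
  have he : ∀ m ∈ B ∪ C, (τ * σ) m = m := by
    simp only [Finset.mem_union, Equiv.Perm.mul_apply]
    rintro m (hm | hm)
    · rw [hσB m hm, hτ m (Finset.mem_union_left A hm)]
    · exact hτσ m hm
  refine ⟨τ * σ, mul_mem hτG hσG, he, ?_⟩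
  have hτA : A.image τ = A := Finset.image_perm_eq_self fun m hm => hτ m (by simp [hm])
  have hτB : B.image τ = B := Finset.image_perm_eq_self fun m hm => hτ m (by simp [hm])
  have hC : C.image (τ * σ) = C := Finset.image_perm_eq_self fun m hm => he m (by simp [hm])
  have := hswir.invariance τ hτG A B _ hind
  rwa [hτA, hτB, Finset.image_image, ← Equiv.Perm.coe_mul, Finset.image_union, hC] at this

end IsSWIR

theorem swir_add_conjugates_general {M : Type*} [DecidableEq M]
    (G : Subgroup (Equiv.Perm M)) (indep : Finset M → Finset M → Finset M → Prop)
    (hswir : IsSWIR G indep) (A B C : Finset M) (h : indep A B C)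
    (k : ℕ) (gs : Fin k → Equiv.Perm M) :
    (∃ e ∈ G, (∀ m ∈ B ∪ C, e m = m) ∧
      indep A B (C ∪ Finset.univ.biUnion fun i => C.image ⇑(e * gs i * e⁻¹))) ∧
    (∃ f ∈ G, (∀ m ∈ A ∪ B, f m = m) ∧
      indep (A ∪ Finset.univ.biUnion fun i => A.image ⇑(f * gs i * f⁻¹)) B C) := by
  constructor
  · obtain ⟨e, heG, he, hind⟩ :=
      hswir.exists_fix_indep_union_image h (Finset.univ.biUnion fun i => C.image (gs i))
    refine ⟨e, heG, he, ?_⟩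
    rwa [Finset.image_biUnion_image_conj _ _ _ fun m hm => he m (by simp [hm])] at hind
  · obtain ⟨f, hfG, hf, hind⟩ :=
      hswir.flip.exists_fix_indep_union_image h (Finset.univ.biUnion fun i => A.image (gs i))
    rw [Finset.union_comm] at hf
    refine ⟨f, hfG, hf, ?_⟩
    rwa [Finset.image_biUnion_image_conj _ _ _ fun m hm => hf m (by simp [hm])] at hind

/-- Lemma 2.5: given `A ⫫_B C` and `g₁, …, gₙ ∈ Aut(M)`, there is `e ∈ Aut(M)`
fixing `B ∪ C` pointwise with `A ⫫_B C g₁ᵉ(C) ⋯ gₙᵉ(C)`, and `f ∈ Aut(M)` fixing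
`A ∪ B` pointwise with `A g₁ᶠ(A) ⋯ gₙᶠ(A) ⫫_B C` (where `gᵉ = e g e⁻¹`). -/
theorem swir_add_conjugates {M : Type*} [DecidableEq M] [Countable M]
    (G : Subgroup (Equiv.Perm M)) (indep : Finset M → Finset M → Finset M → Prop)
    (hswir : IsSWIR G indep) (A B C : Finset M) (h : indep A B C)
    (k : ℕ) (gs : Fin k → Equiv.Perm M) (hgs : ∀ i, gs i ∈ G) :
    (∃ e ∈ G, (∀ m ∈ B ∪ C, e m = m) ∧
      indep A B (C ∪ Finset.univ.biUnion fun i => C.image ⇑(e * gs i * e⁻¹))) ∧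
    (∃ f ∈ G, (∀ m ∈ A ∪ B, f m = m) ∧
      indep (A ∪ Finset.univ.biUnion fun i => A.image ⇑(f * gs i * f⁻¹)) B C) :=
  swir_add_conjugates_general G indep hswir A B C h k gs
end

section
/- Let M be a countable homogeneous structure with a stationary weak independence relation ⫫, and suppose g ∈ Aut(M) moves almost R-maximally. Let X, Y be finite sets with g(X) = Y, and let x, y be tuples satisfying g(tp(x/X)) = tp(y/Y), x ⫫_X (y ∪ Y), and y ⫫_Y X. Then there exists a ∈ Aut(M) fixing X ∪ Y pointwise such that g^a(x) = y. -/
/-!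
Take `z ≡_{XY} x` with `z ⫫_{XY} g⁻¹X` and `z ⫫_{XY} g(z)` (existence, then almost
R-maximality over `XY ∪ g⁻¹X`). With `x ⫫_X Y` this gives `z ⫫_X g⁻¹X`, i.e. `g(z) ⫫_Y X`, so
stationarity over `Y` upgrades `g(z) ≡_Y g(x) ≡_Y y` to `g(z) ≡_{XY} y`. Now `(z, g(z))` and
`(x, y)` are pairs independent over `XY` whose coordinates have the same types, so
stationarity once more gives `a` fixing `XY` with `a(z) = x` and `a(g(z)) = y`, whence
`gᵃ(x) = y`.
-/

variable {M : Type*} [DecidableEq M]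

section IndependenceCalculus

variable {M : Type*}

namespace SameTypeOver

variable {G : Subgroup (Equiv.Perm M)} {B : Finset M} {n : ℕ} {x y z : Fin n → M}

theorem symm (h : SameTypeOver G B x y) : SameTypeOver G B y x := by
  obtain ⟨k, hkG, hkB, hk⟩ := h
  refine ⟨k⁻¹, inv_mem hkG, fun b hb => ?_, fun i => ?_⟩
  · rw [Equiv.Perm.inv_eq_iff_eq, hkB b hb]
  · rw [Equiv.Perm.inv_eq_iff_eq, hk i]

theorem trans (hxy : SameTypeOver G B x y) (hyz : SameTypeOver G B y z) :
    SameTypeOver G B x z := by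
  obtain ⟨k, hkG, hkB, hk⟩ := hxy
  obtain ⟨l, hlG, hlB, hl⟩ := hyz
  exact ⟨l * k, mul_mem hlG hkG, fun b hb => by simp [hkB b hb, hlB b hb],
    fun i => by simp [hk i, hl i]⟩

theorem mono {B' : Finset M} (hBB' : B ⊆ B') (h : SameTypeOver G B' x y) :
    SameTypeOver G B x y := by
  obtain ⟨k, hkG, hkB, hk⟩ := h
  exact ⟨k, hkG, fun b hb => hkB b (hBB' hb), hk⟩

theorem map [DecidableEq M] {g : Equiv.Perm M} (hg : g ∈ G) (h : SameTypeOver G B x y) :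
    SameTypeOver G (B.image g) (fun i => g (x i)) (fun i => g (y i)) := by
  obtain ⟨k, hkG, hkB, hk⟩ := h
  refine ⟨g * k * g⁻¹, mul_mem (mul_mem hg hkG) (inv_mem hg),
    Finset.forall_mem_image.2 fun b hb => by simp [hkB b hb], fun i => by simp [hk i]⟩

end SameTypeOver

variable [DecidableEq M]

theorem image_tset {n : ℕ} (k : M → M) (x : Fin n → M) :
    (tset x).image k = tset (fun i => k (x i)) := by
  simp only [tset, Finset.image_image]
  rfl

theorem Finset.image_eq_self_of_fixes {B : Finset M} {k : M → M} (hk : ∀ b ∈ B, k b = b) :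
    B.image k = B :=
  (Finset.image_congr hk).trans B.image_id

namespace IsSWIR

variable {G : Subgroup (Equiv.Perm M)} {indep : Finset M → Finset M → Finset M → Prop}

theorem indep_image_of_fixes (hswir : IsSWIR G indep) {k : Equiv.Perm M} (hk : k ∈ G)
    {A B C : Finset M} (hkB : ∀ b ∈ B, k b = b) (h : indep A B C) :
    indep (A.image k) B (C.image k) := by
  simpa only [Finset.image_eq_self_of_fixes hkB] using hswir.invariance k hk A B C h

theorem indep_of_sameTypeOver (hswir : IsSWIR G indep) {B C : Finset M} {n : ℕ}
    {x y : Fin n → M} (hxy : SameTypeOver G (B ∪ C) x y) (h : indep (tset x) B C) :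
    indep (tset y) B C := by
  obtain ⟨k, hkG, hkBC, hk⟩ := hxy
  have := hswir.indep_image_of_fixes hkG (fun b hb => hkBC b (Finset.mem_union_left C hb)) h
  rwa [image_tset, funext hk,
    Finset.image_eq_self_of_fixes fun b hb => hkBC b (Finset.mem_union_right B hb)] at this

theorem exists_map_pair_of_indep (hswir : IsSWIR G indep) {B : Finset M} {n m : ℕ}
    {z x : Fin n → M} {u y : Fin m → M}
    (hzx : SameTypeOver G B z x) (hzu : indep (tset z) B (tset u))
    (huy : SameTypeOver G B u y) (hxy : indep (tset x) B (tset y)) :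
    ∃ a ∈ G, (∀ b ∈ B, a b = b) ∧ (∀ i, a (z i) = x i) ∧ ∀ j, a (u j) = y j := by
  obtain ⟨h, hhG, hhB, hhz⟩ := hzx
  set w : Fin m → M := fun j => h (u j)
  have hxw : indep (tset x) B (tset w) := by
    simpa only [image_tset, hhz] using hswir.indep_image_of_fixes hhG hhB hzu
  have huw : SameTypeOver G B u w := ⟨h, hhG, hhB, fun _ => rfl⟩
  have hwy : SameTypeOver G B w y := huw.symm.trans huy
  obtain ⟨f, hfG, hfBx, hfw⟩ := hswir.stationary_left B (tset x) m w y hwy hxw hxy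
  have hfB : ∀ b ∈ B, f b = b := fun b hb => hfBx b (Finset.mem_union_left _ hb)
  have hfx : ∀ i, f (x i) = x i := fun i =>
    hfBx (x i) (Finset.mem_union_right _ (Finset.mem_image_of_mem x (Finset.mem_univ i)))
  exact ⟨f * h, mul_mem hfG hhG, fun b hb => by simp [hhB b hb, hfB b hb],
    fun i => by simp [hhz i, hfx i], hfw⟩

theorem exists_sameTypeOver_indep_indep_apply (hswir : IsSWIR G indep) {g : Equiv.Perm M}
    (hR : MovesAlmostRMax G indep g) (B C : Finset M) {n : ℕ} (x : Fin n → M) :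
    ∃ z : Fin n → M, SameTypeOver G B x z ∧ indep (tset z) B C ∧
      indep (tset z) B (tset fun i => g (z i)) := by
  obtain ⟨z₁, hxz₁, hz₁C⟩ := hswir.exists_right B C n x
  obtain ⟨z, hz₁z, hzgz⟩ := hR (B ∪ C) n z₁
  have hzC : indep (tset z) B C := hswir.indep_of_sameTypeOver hz₁z hz₁C
  exact ⟨z, hxz₁.trans (hz₁z.mono Finset.subset_union_left), hzC,
    hswir.trans_right _ B C _ hzC hzgz⟩

end IsSWIR

end IndependenceCalculus

theorem swir_match_tuple_general {M : Type*} [DecidableEq M]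
    (G : Subgroup (Equiv.Perm M)) (indep : Finset M → Finset M → Finset M → Prop)
    (hswir : IsSWIR G indep) (g : Equiv.Perm M) (hg : g ∈ G)
    (hR : MovesAlmostRMax G indep g)
    (X Y : Finset M) (hXY : X.image ⇑g = Y)
    (n : ℕ) (x y : Fin n → M)
    (htp : SameTypeOver G Y (fun i => g (x i)) y)
    (h1 : indep (tset x) X (tset y ∪ Y)) (h2 : indep (tset y) Y X) :
    ∃ a ∈ G, (∀ m ∈ X ∪ Y, a m = m) ∧ ∀ i, (a * g * a⁻¹) (x i) = y i := by
  obtain ⟨hxY, hxy⟩ := hswir.monotone_right (tset x) X Y (tset y) (Finset.union_comm _ Y ▸ h1)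
  obtain ⟨z, hxz, hzXYg, hzgz⟩ :=
    hswir.exists_sameTypeOver_indep_indep_apply hR (X ∪ Y) (X.image ⇑g⁻¹) x
  have hzXg : indep (tset z) X (X.image ⇑g⁻¹) :=
    hswir.trans_right _ X Y _ (hswir.indep_of_sameTypeOver hxz hxY) hzXYg
  have hgzX : indep (tset fun i => g (z i)) Y X := by
    simpa only [image_tset, hXY, Finset.image_image, Equiv.Perm.coe_inv,
      Equiv.self_comp_symm, Finset.image_id] using hswir.invariance g hg _ _ _ hzXg
  have hgzy : SameTypeOver G (X ∪ Y) (fun i => g (z i)) y := by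
    have hgxgz := hXY ▸ (hxz.mono Finset.subset_union_left).map hg
    simpa only [Finset.union_comm Y X] using
      hswir.stationary_right Y X n _ y (hgxgz.symm.trans htp) hgzX h2
  obtain ⟨a, ha, haXY, haz, hagz⟩ := hswir.exists_map_pair_of_indep hxz.symm hzgz hgzy hxy
  refine ⟨a, ha, haXY, fun i => ?_⟩
  rw [Equiv.Perm.mul_apply, Equiv.Perm.mul_apply, ← haz i, Equiv.Perm.coe_inv,
    Equiv.symm_apply_apply, hagz]

/-- Lemma 2.8 (Lemma 3.6 of Tent–Ziegler, asymmetric form): if `g` moves almost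
R-maximally, `g(X) = Y`, `g(tp(x/X)) = tp(y/Y)`, `x ⫫_X yY` and `y ⫫_Y X`, then
there is `a ∈ Aut(M)` fixing `X ∪ Y` pointwise with `gᵃ(x) = y`. -/
theorem swir_match_tuple {M : Type*} [DecidableEq M] [Countable M]
    (G : Subgroup (Equiv.Perm M)) (indep : Finset M → Finset M → Finset M → Prop)
    (hswir : IsSWIR G indep) (g : Equiv.Perm M) (hg : g ∈ G)
    (hR : MovesAlmostRMax G indep g)
    (X Y : Finset M) (hXY : X.image ⇑g = Y)
    (n : ℕ) (x y : Fin n → M)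
    (htp : SameTypeOver G Y (fun i => g (x i)) y)
    (h1 : indep (tset x) X (tset y ∪ Y)) (h2 : indep (tset y) Y X) :
    ∃ a ∈ G, (∀ m ∈ X ∪ Y, a m = m) ∧ ∀ i, (a * g * a⁻¹) (x i) = y i :=
  swir_match_tuple_general G indep hswir g hg hR X Y hXY n x y htp h1 h2
end
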